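/- Suppose F = f + Ψ where f : ℝⁿ → ℝ is L-smooth (L > 0, f not necessarily convex) and Ψ : ℝⁿ → ℝ ∪ {+∞} is proper, closed and convex, and let F* = inf_x F(x) > −∞. Let x₀ = z₀ ∈ ℝⁿ, let M₁ be an affine subspace containing x₀ + span{G_{1/L}(x₀)}, and suppose {M_k}_{k≥1}, {x_k}, {y_k}, {z_k} satisfy: for each k ≥ 1, x_k minimizes F over M_k; z_k ∈ M_k; and M_{k+1} contains z_k + span{G_{1/L}(z_k)} and x_k + span{G_{1/L}(x_k)}. Then for all k ≥ 0, min_{j=0,…,k} ‖G_{1/L}(x_j)‖ ≤ √(2L(F(x₀) − F*)/(k+1)). -/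

import Mathlib

/-!
From `x_k`, the proximal-gradient step `p = x_k - G(x_k)/L` lies in `M_{k+1}`, so
`F(x_{k+1}) ≤ F(p)`. Convexity of `Ψ` makes `w ↦ Ψ w + (L/2)‖w - y‖²` strongly convex, which
upgrades the minimality of the proximal point to a three-point inequality; combined with the
quadratic upper bound of the `L`-smooth `f` it yields the sufficient decrease
`F(p) + ‖G(x_k)‖²/(2L) ≤ F(x_k)`. Telescoping bounds `∑_{j ≤ k} ‖G(x_j)‖²` by
`2L(F(x₀) − F*)`, and the smallest of the `k + 1` terms is at most their average.
-/

open scoped RealInnerProductSpace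
open Filter Topology Finset

lemma le_of_forall_add_mul_le {a b d : ℝ}
    (h : ∀ l ∈ Set.Ioc (0 : ℝ) 1, a + (1 - l) * d ≤ b) : a + d ≤ b := by
  have hcont : Continuous fun l : ℝ => a + (1 - l) * d := by fun_prop
  have hlim : Tendsto (fun l : ℝ => a + (1 - l) * d) (𝓝[>] 0) (𝓝 (a + d)) := by
    simpa using (hcont.tendsto 0).mono_left nhdsWithin_le_nhds
  refine le_of_tendsto hlim ?_
  filter_upwards [Ioc_mem_nhdsGT one_pos] with l hl using h l hl

section

variable {E : Type*} [NormedAddCommGroup E] [InnerProductSpace ℝ E]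

lemma norm_sub_smul_add_smul_sq (x p z : E) (l : ℝ) :
    ‖x - ((1 - l) • p + l • z)‖ ^ 2
      = (1 - l) * ‖x - p‖ ^ 2 + l * ‖x - z‖ ^ 2 - l * (1 - l) * ‖z - p‖ ^ 2 := by
  have hsplit : x - ((1 - l) • p + l • z) = (1 - l) • (x - p) + l • (x - z) := by
    module
  have hzp : z - p = (x - p) - (x - z) := by abel
  rw [hsplit, hzp, norm_add_sq_real, norm_sub_sq_real (x - p), real_inner_smul_left,
    real_inner_smul_right]
  simp only [norm_smul, mul_pow, Real.norm_eq_abs, sq_abs]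
  ring

/-- `p = prox_{tΨ}(x)` in the paper's notation. -/
def IsProxPoint (Ψ : E → EReal) (t : ℝ) (x p : E) : Prop :=
  ∀ w, Ψ p + ((‖x - p‖ ^ 2 / (2 * t) : ℝ) : EReal) ≤ Ψ w + ((‖x - w‖ ^ 2 / (2 * t) : ℝ) : EReal)

lemma IsProxPoint.add_norm_sq_le {Ψ : E → EReal}
    (hconvex : ∀ x y : E, ∀ a b : ℝ, 0 ≤ a → 0 ≤ b → a + b = 1 →
      Ψ (a • x + b • y) ≤ (a : EReal) * Ψ x + (b : EReal) * Ψ y)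
    {t : ℝ} {x p z : E} (hp : IsProxPoint Ψ t x p) {ψp ψz : ℝ}
    (hΨp : Ψ p = ψp) (hΨz : Ψ z = ψz) :
    ψp + ‖x - p‖ ^ 2 / (2 * t) + ‖z - p‖ ^ 2 / (2 * t) ≤ ψz + ‖x - z‖ ^ 2 / (2 * t) := by
  set P := ‖x - p‖ ^ 2 / (2 * t)
  set Q := ‖x - z‖ ^ 2 / (2 * t)
  set D := ‖z - p‖ ^ 2 / (2 * t)
  -- Test minimality of `p` against `(1 - l) • p + l • z`, divide by `l`, and let `l → 0`.
  refine le_of_forall_add_mul_le fun l ⟨hl0, hl1⟩ => ?_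
  have hcomb : Ψ ((1 - l) • p + l • z) ≤ (((1 - l) * ψp + l * ψz : ℝ) : EReal) := by
    have := hconvex p z (1 - l) l (by linarith) hl0.le (by ring)
    rwa [hΨp, hΨz, ← EReal.coe_mul, ← EReal.coe_mul, ← EReal.coe_add] at this
  have hmin : ψp + P ≤ (1 - l) * ψp + l * ψz + ((1 - l) * P + l * Q - l * (1 - l) * D) := by
    have := (hp ((1 - l) • p + l • z)).trans (add_le_add_left hcomb _)
    rw [hΨp, norm_sub_smul_add_smul_sq, ← EReal.coe_add, ← EReal.coe_add,
      EReal.coe_le_coe_iff] at this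
    convert this using 2; simp only [P, Q, D]; ring
  have hscaled : l * (ψp + P + (1 - l) * D) ≤ l * (ψz + Q) := by linear_combination hmin
  exact le_of_mul_le_mul_left hscaled hl0

lemma IsProxPoint.sufficient_decrease {Ψ : E → EReal}
    (hconvex : ∀ x y : E, ∀ a b : ℝ, 0 ≤ a → 0 ≤ b → a + b = 1 →
      Ψ (a • x + b • y) ≤ (a : EReal) * Ψ x + (b : EReal) * Ψ y)
    (hΨ : ∀ w, Ψ w ≠ ⊥) {L : ℝ} (hL : 0 < L) {f : E → ℝ} {g u p : E}
    (hf : f p ≤ f u + ⟪g, p - u⟫ + L / 2 * ‖p - u‖ ^ 2)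
    (hp : IsProxPoint Ψ (1 / L) (u - (1 / L) • g) p) :
    (f p : EReal) + Ψ p + ((L / 2 * ‖u - p‖ ^ 2 : ℝ) : EReal) ≤ f u + Ψ u := by
  by_cases hu : Ψ u = ⊤
  · rw [hu, EReal.coe_add_top]; exact le_top
  lift Ψ u to ℝ using ⟨hu, hΨ u⟩ with ψu hψu
  have hp_top : Ψ p ≠ ⊤ := by
    intro htop
    have := hp u
    rw [htop, EReal.top_add_coe, ← hψu, ← EReal.coe_add, top_le_iff] at this
    exact EReal.coe_ne_top _ this
  lift Ψ p to ℝ using ⟨hp_top, hΨ p⟩ with ψp hψp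
  have h3 := hp.add_norm_sq_le hconvex hψp.symm hψu.symm
  have e1 : ‖u - (1 / L) • g - u‖ ^ 2 / (2 * (1 / L)) = ‖g‖ ^ 2 / (2 * L) := by
    rw [sub_sub_cancel_left, norm_neg, norm_smul, mul_pow, Real.norm_eq_abs, sq_abs]
    field_simp
  have e2 : ‖u - (1 / L) • g - p‖ ^ 2 / (2 * (1 / L))
      = L / 2 * ‖u - p‖ ^ 2 - ⟪u - p, g⟫ + ‖g‖ ^ 2 / (2 * L) := by
    rw [sub_right_comm, norm_sub_sq_real, real_inner_smul_right, norm_smul, mul_pow,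
      Real.norm_eq_abs, sq_abs]
    field_simp
  have e3 : ‖u - p‖ ^ 2 / (2 * (1 / L)) = L / 2 * ‖u - p‖ ^ 2 := by
    field_simp
  have hinner : ⟪g, p - u⟫ = -⟪u - p, g⟫ := by
    rw [real_inner_comm, ← neg_sub, inner_neg_left]
  rw [e1, e2, e3] at h3
  rw [norm_sub_rev, hinner] at hf
  have hreal : f p + ψp + L / 2 * ‖u - p‖ ^ 2 ≤ f u + ψu := by linarith
  exact_mod_cast hreal

end

lemma sum_range_le_sub_of_add_le {a : ℕ → EReal} {c : ℕ → ℝ} {A m : ℝ} (h0 : a 0 = A)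
    (hdesc : ∀ k, a (k + 1) + (c k : EReal) ≤ a k) (hbdd : ∀ k, (m : EReal) ≤ a k) (n : ℕ) :
    ∑ i ∈ range n, c i ≤ A - m := by
  have key : ∀ n, a n + ((∑ i ∈ range n, c i : ℝ) : EReal) ≤ A := by
    intro n
    induction n with
    | zero => simp [h0]
    | succ n ih =>
      calc a (n + 1) + ((∑ i ∈ range (n + 1), c i : ℝ) : EReal)
          = a (n + 1) + (c n : EReal) + ((∑ i ∈ range n, c i : ℝ) : EReal) := by
            rw [sum_range_succ, EReal.coe_add]; abel
        _ ≤ a n + ((∑ i ∈ range n, c i : ℝ) : EReal) := by gcongr; exact hdesc n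
        _ ≤ A := ih
  have hm : ((m + ∑ i ∈ range n, c i : ℝ) : EReal) ≤ A := by
    calc ((m + ∑ i ∈ range n, c i : ℝ) : EReal)
        = (m : EReal) + ((∑ i ∈ range n, c i : ℝ) : EReal) := EReal.coe_add _ _
      _ ≤ a n + ((∑ i ∈ range n, c i : ℝ) : EReal) := by gcongr; exact hbdd n
      _ ≤ A := key n
  have := EReal.coe_le_coe_iff.mp hm
  linarith

lemma exists_le_sqrt_of_sum_sq_le {a : ℕ → ℝ} {B : ℝ} (k : ℕ)
    (h : ∑ i ∈ range (k + 1), a i ^ 2 ≤ B) : ∃ j ≤ k, a j ≤ √(B / (k + 1)) := by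
  have hconst : ∑ i ∈ range (k + 1), a i ^ 2 ≤ ∑ _i ∈ range (k + 1), B / (k + 1) := by
    rwa [sum_const, card_range, nsmul_eq_mul, Nat.cast_add_one, mul_div_cancel₀ _ (by positivity)]
  obtain ⟨j, hj, hle⟩ := exists_le_of_sum_le nonempty_range_add_one hconst
  exact ⟨j, Nat.lt_succ_iff.mp (mem_range.mp hj), (le_abs_self _).trans (Real.abs_le_sqrt hle)⟩

theorem idealized_algorithm_nonconvex_rate_general {n : ℕ} (L : ℝ) (hL : 0 < L)
    (f : EuclideanSpace ℝ (Fin n) → ℝ)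
    (f' : EuclideanSpace ℝ (Fin n) → EuclideanSpace ℝ (Fin n))
    (hsmooth : ∀ x y : EuclideanSpace ℝ (Fin n),
      |f x - f y - ⟪f' y, x - y⟫| ≤ L / 2 * ‖x - y‖ ^ 2)
    (Ψ : EuclideanSpace ℝ (Fin n) → EReal)
    (hconvex : ∀ x y : EuclideanSpace ℝ (Fin n), ∀ a b : ℝ, 0 ≤ a → 0 ≤ b → a + b = 1 →
      Ψ (a • x + b • y) ≤ (a : EReal) * Ψ x + (b : EReal) * Ψ y)
    (prox : ℝ → EuclideanSpace ℝ (Fin n) → EuclideanSpace ℝ (Fin n))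
    (hprox : ∀ t : ℝ, 0 < t → ∀ x z : EuclideanSpace ℝ (Fin n),
      Ψ (prox t x) + ((‖x - prox t x‖ ^ 2 / (2 * t) : ℝ) : EReal)
        ≤ Ψ z + ((‖x - z‖ ^ 2 / (2 * t) : ℝ) : EReal))
    (F : EuclideanSpace ℝ (Fin n) → EReal)
    (hF : ∀ x, F x = (f x : EReal) + Ψ x)
    (G : ℝ → EuclideanSpace ℝ (Fin n) → EuclideanSpace ℝ (Fin n))
    (hG : ∀ t x, G t x = t⁻¹ • (x - prox t (x - t • f' x)))
    -- `F* = inf F > −∞`, expressed by requiring the infimum to be the real `Fstar`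
    (Fstar : ℝ) (hFstar : ((Fstar : ℝ) : EReal) = ⨅ w, F w)
    (M : ℕ → AffineSubspace ℝ (EuclideanSpace ℝ (Fin n)))
    (x z : ℕ → EuclideanSpace ℝ (Fin n))
    -- the starting value `F(x₀)` is the real number `F0`
    (F0 : ℝ) (hF0 : F (x 0) = ((F0 : ℝ) : EReal))
    (hM1 : ∀ c : ℝ, x 0 + c • G (1 / L) (x 0) ∈ M 1)
    (hx : ∀ k, 1 ≤ k → x k ∈ M k ∧ ∀ w ∈ M k, F (x k) ≤ F w)
    (hM : ∀ k, 1 ≤ k → ∀ c : ℝ,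
      z k + c • G (1 / L) (z k) ∈ M (k + 1) ∧
      x k + c • G (1 / L) (x k) ∈ M (k + 1)) :
    ∀ k : ℕ, ∃ j ≤ k,
      ‖G (1 / L) (x j)‖ ≤ Real.sqrt (2 * L * (F0 - Fstar) / ((k : ℝ) + 1)) := by
  have hFstar_le : ∀ w, (Fstar : EReal) ≤ F w := fun w => hFstar ▸ iInf_le F w
  have hΨ : ∀ w, Ψ w ≠ ⊥ := fun w hw => by
    simpa [hF, hw] using hFstar_le w
  set p := fun u => prox (1 / L) (u - (1 / L) • f' u)
  have hGp : ∀ u, G (1 / L) u = L • (u - p u) := by simp [hG, p]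
  have hp_mem : ∀ k, p (x k) ∈ M (k + 1) := by
    intro k
    have hstep : x k + (-(1 / L)) • G (1 / L) (x k) = p (x k) := by
      rw [hGp, smul_smul, neg_mul, one_div_mul_cancel hL.ne', neg_one_smul]
      abel
    rw [← hstep]
    rcases Nat.eq_zero_or_pos k with rfl | hk
    · exact hM1 _
    · exact (hM k hk _).2
  have hdesc : ∀ k,
      F (x (k + 1)) + ((‖G (1 / L) (x k)‖ ^ 2 / (2 * L) : ℝ) : EReal) ≤ F (x k) := by
    intro k
    have hnorm : ‖G (1 / L) (x k)‖ ^ 2 / (2 * L) = L / 2 * ‖x k - p (x k)‖ ^ 2 := by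
      rw [hGp, norm_smul, mul_pow, Real.norm_of_nonneg hL.le]
      field_simp
    have hf : f (p (x k))
        ≤ f (x k) + ⟪f' (x k), p (x k) - x k⟫ + L / 2 * ‖p (x k) - x k‖ ^ 2 := by
      linarith [(abs_le.mp (hsmooth (p (x k)) (x k))).2]
    calc F (x (k + 1)) + ((‖G (1 / L) (x k)‖ ^ 2 / (2 * L) : ℝ) : EReal)
        ≤ F (p (x k)) + ((L / 2 * ‖x k - p (x k)‖ ^ 2 : ℝ) : EReal) := by
          rw [hnorm]; gcongr; exact (hx (k + 1) k.succ_pos).2 _ (hp_mem k)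
      _ ≤ F (x k) := by
          rw [hF, hF]
          exact IsProxPoint.sufficient_decrease hconvex hΨ hL hf (hprox _ (by positivity) _)
  intro k
  have hsum := sum_range_le_sub_of_add_le (a := fun k => F (x k)) hF0 hdesc
    (fun k => hFstar_le _) (k + 1)
  rw [← sum_div, div_le_iff₀ (by positivity)] at hsum
  exact exists_le_sqrt_of_sum_sq_le k (by linarith)

/-- for the idealized framework applied to a (possibly
nonconvex) `L`-smooth `f`, the smallest prox-gradient norm among the first
`k+1` iterates is at most `√(2L(F(x₀) − F*)/(k+1))`. -/
theorem idealized_algorithm_nonconvex_rate {n : ℕ} (L : ℝ) (hL : 0 < L)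
    (f : EuclideanSpace ℝ (Fin n) → ℝ)
    (f' : EuclideanSpace ℝ (Fin n) → EuclideanSpace ℝ (Fin n))
    (hdiff : ∀ x, HasGradientAt f (f' x) x)
    (hsmooth : ∀ x y : EuclideanSpace ℝ (Fin n),
      |f x - f y - ⟪f' y, x - y⟫| ≤ L / 2 * ‖x - y‖ ^ 2)
    (Ψ : EuclideanSpace ℝ (Fin n) → EReal)
    (hproper : (∀ x, Ψ x ≠ ⊥) ∧ (∃ x, Ψ x ≠ ⊤))
    (hclosed : LowerSemicontinuous Ψ)
    (hconvex : ∀ x y : EuclideanSpace ℝ (Fin n), ∀ a b : ℝ, 0 ≤ a → 0 ≤ b → a + b = 1 →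
      Ψ (a • x + b • y) ≤ (a : EReal) * Ψ x + (b : EReal) * Ψ y)
    (prox : ℝ → EuclideanSpace ℝ (Fin n) → EuclideanSpace ℝ (Fin n))
    (hprox : ∀ t : ℝ, 0 < t → ∀ x z : EuclideanSpace ℝ (Fin n),
      Ψ (prox t x) + ((‖x - prox t x‖ ^ 2 / (2 * t) : ℝ) : EReal)
        ≤ Ψ z + ((‖x - z‖ ^ 2 / (2 * t) : ℝ) : EReal))
    (F : EuclideanSpace ℝ (Fin n) → EReal)
    (hF : ∀ x, F x = (f x : EReal) + Ψ x)
    (G : ℝ → EuclideanSpace ℝ (Fin n) → EuclideanSpace ℝ (Fin n))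
    (hG : ∀ t x, G t x = t⁻¹ • (x - prox t (x - t • f' x)))
    -- `F* = inf F > −∞`, expressed by requiring the infimum to be the real `Fstar`
    (Fstar : ℝ) (hFstar : ((Fstar : ℝ) : EReal) = ⨅ w, F w)
    (M : ℕ → AffineSubspace ℝ (EuclideanSpace ℝ (Fin n)))
    (x z : ℕ → EuclideanSpace ℝ (Fin n))
    -- the starting value `F(x₀)` is the real number `F0`
    (F0 : ℝ) (hF0 : F (x 0) = ((F0 : ℝ) : EReal))
    (hx0z0 : x 0 = z 0)
    (hM1 : ∀ c : ℝ, x 0 + c • G (1 / L) (x 0) ∈ M 1)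
    (hx : ∀ k, 1 ≤ k → x k ∈ M k ∧ ∀ w ∈ M k, F (x k) ≤ F w)
    (hzmem : ∀ k, 1 ≤ k → z k ∈ M k)
    (hM : ∀ k, 1 ≤ k → ∀ c : ℝ,
      z k + c • G (1 / L) (z k) ∈ M (k + 1) ∧
      x k + c • G (1 / L) (x k) ∈ M (k + 1)) :
    ∀ k : ℕ, ∃ j ≤ k,
      ‖G (1 / L) (x j)‖ ≤ Real.sqrt (2 * L * (F0 - Fstar) / ((k : ℝ) + 1)) :=
  idealized_algorithm_nonconvex_rate_general L hL f f' hsmooth Ψ hconvex prox hprox F hF G hG Fstar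
    hFstar M x z F0 hF0 hM1 hx hM
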